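/- If 𝒯 is an infinite family of complete L-theories that has no e-minimal subfamily of the form 𝒯_φ — that is, for no L-sentence φ is 𝒯_φ infinite and e-minimal — then 𝒯 is not e-totally transcendental, i.e., RS(𝒯) = ∞. -/

import Mathlib

open FirstOrder Language Cardinal Set

universe u v w

variable {L : FirstOrder.Language.{u, v}}

/-- A complete theory: a satisfiable set of sentences containing each sentence or its
negation (`Theory.IsMaximal` in Mathlib). -/
abbrev CTheory (L : FirstOrder.Language.{u, v}) : Type max u v :=
  {T : L.Theory // T.IsMaximal}

/-- The neighbourhood `𝒯_φ = {T ∈ 𝒯 | φ ∈ T}`. -/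
def nbhd (𝒯 : Set (CTheory L)) (φ : L.Sentence) : Set (CTheory L) :=
  {T | T ∈ 𝒯 ∧ φ ∈ T.1}

/-- `T` is an accumulation point of `𝒯` if for every sentence `φ ∈ T` the set `𝒯_φ` is
infinite. -/
def IsAccPoint (𝒯 : Set (CTheory L)) (T : CTheory L) : Prop :=
  ∀ φ : L.Sentence, φ ∈ T.1 → (nbhd 𝒯 φ).Infinite

/-- The `E`-closure of `𝒯`: `𝒯` together with all its accumulation points. -/
def ClE (𝒯 : Set (CTheory L)) : Set (CTheory L) :=
  𝒯 ∪ {T | IsAccPoint 𝒯 T}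

/-- The `e`-spectrum of `𝒯`: the cardinality of the set of accumulation points of `𝒯`. -/
noncomputable def eSp (𝒯 : Set (CTheory L)) : Cardinal :=
  Cardinal.mk {T : CTheory L // IsAccPoint 𝒯 T}

/-- Two sentences are inconsistent if `{φ, ψ}` is unsatisfiable. -/
def Inconsistent (φ ψ : L.Sentence) : Prop :=
  ¬ FirstOrder.Language.Theory.IsSatisfiable ({φ, ψ} : L.Theory)

open Classical in
/-- `RSge α 𝒯` says `RS(𝒯) ≥ α`: `RS(𝒯) ≥ 0` iff `𝒯 ≠ ∅`; `RS(𝒯) ≥ 1` iff `𝒯` is infinite;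
for `β ≥ 1`, `RS(𝒯) ≥ β + 1` iff there are pairwise inconsistent sentences `φ_n`, `n ∈ ℕ`,
with `RS(𝒯_{φ_n}) ≥ β` for all `n`; for limit `λ`, `RS(𝒯) ≥ λ` iff `RS(𝒯) ≥ β` for all
`β < λ`. -/
noncomputable def RSge (α : Ordinal.{w}) : Set (CTheory L) → Prop :=
  @Ordinal.limitRecOn (fun _ => Set (CTheory L) → Prop) α
    (fun 𝒯 => 𝒯.Nonempty)
    (fun β ih 𝒯 =>
      if β = 0 then 𝒯.Infinite
      else ∃ φ : ℕ → L.Sentence,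
        (∀ m n : ℕ, m ≠ n → Inconsistent (φ m) (φ n)) ∧ ∀ k : ℕ, ih (nbhd 𝒯 (φ k)))
    (fun β _ ih 𝒯 => ∀ γ : Ordinal, ∀ h : γ < β, ih γ h 𝒯)

/-- `RS(𝒯) = α` for an ordinal `α`: `RS(𝒯) ≥ α` but not `RS(𝒯) ≥ α + 1`. -/
def RSeq (𝒯 : Set (CTheory L)) (α : Ordinal.{w}) : Prop :=
  RSge α 𝒯 ∧ ¬ RSge (α + 1) 𝒯

/-- `RS(𝒯) = ∞`: `RS(𝒯) ≥ α` for every ordinal `α`. -/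
def RSinf (𝒯 : Set (CTheory L)) : Prop :=
  ∀ α : Ordinal.{w}, RSge α 𝒯

/-- `ds(𝒯) = n` (relative to `RS(𝒯) = α`): `n` is the largest natural number for which
there exist `n` pairwise inconsistent sentences `φ_1, …, φ_n` with `RS(𝒯_{φ_i}) = α`. -/
def dsEq (𝒯 : Set (CTheory L)) (α : Ordinal.{w}) (n : ℕ) : Prop :=
  IsGreatest {m : ℕ | ∃ φ : Fin m → L.Sentence,
    (∀ i j : Fin m, i ≠ j → Inconsistent (φ i) (φ j)) ∧
    ∀ i : Fin m, RSeq (nbhd 𝒯 (φ i)) α} n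

/-- `𝒯` is `e`-minimal: for every sentence `φ`, `𝒯_φ` is finite or `𝒯_{¬φ}` is finite. -/
def EMinimal (𝒯 : Set (CTheory L)) : Prop :=
  ∀ φ : L.Sentence, (nbhd 𝒯 φ).Finite ∨ (nbhd 𝒯 φ.not).Finite

/-- `𝒯` is `a`-minimal: `𝒯` has infinitely many accumulation points and for every sentence
`φ`, `𝒯_φ` or `𝒯_{¬φ}` has only finitely many accumulation points. -/
def AMinimal (𝒯 : Set (CTheory L)) : Prop :=
  {T : CTheory L | IsAccPoint 𝒯 T}.Infinite ∧
  ∀ φ : L.Sentence,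
    {T : CTheory L | IsAccPoint (nbhd 𝒯 φ) T}.Finite ∨
    {T : CTheory L | IsAccPoint (nbhd 𝒯 φ.not) T}.Finite

/-- `𝒯` is `α`-minimal: `RS(𝒯) = α` and for every sentence `φ`, `RS(𝒯_φ) < α` or
`RS(𝒯_{¬φ}) < α`. -/
def AlphaMinimal (𝒯 : Set (CTheory L)) (α : Ordinal.{w}) : Prop :=
  RSeq 𝒯 α ∧
  ∀ φ : L.Sentence, ¬ RSge α (nbhd 𝒯 φ) ∨ ¬ RSge α (nbhd 𝒯 φ.not)

/-!
If no infinite `𝒯_σ` is `e`-minimal, then every infinite `𝒯_σ` splits into two infinite parts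
`𝒯_{σ ∧ ψ}` and `𝒯_{σ ∧ ¬ψ}`. Splitting the second part again and again yields sentences
`σ_{n+1} = σ_n ∧ ¬ψ_n`, and the pieces `σ_n ∧ ψ_n` are pairwise inconsistent with infinite
neighbourhoods. Since the neighbourhoods of neighbourhoods of `𝒯` are again neighbourhoods of `𝒯`,
transfinite induction shows `RS(𝒯_σ) ≥ α` for every ordinal `α` and every infinite `𝒯_σ`.
-/

namespace CTheory

theorem mem_iff_realize (T : CTheory L) (φ : L.Sentence) :
    φ ∈ T.1 ↔ ∀ M : Theory.ModelType.{u, v, max u v} T.1, M ⊨ φ :=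
  (T.2.mem_iff_models φ).trans Theory.models_sentence_iff

theorem inf_mem_iff (T : CTheory L) (φ ψ : L.Sentence) :
    φ ⊓ ψ ∈ T.1 ↔ φ ∈ T.1 ∧ ψ ∈ T.1 := by
  simp only [mem_iff_realize, Sentence.realize_inf, forall_and]

theorem top_mem (T : CTheory L) : (⊤ : L.Sentence) ∈ T.1 := by
  simp [mem_iff_realize]

end CTheory

theorem nbhd_top (𝒯 : Set (CTheory L)) : nbhd 𝒯 ⊤ = 𝒯 := by
  ext T
  simp [nbhd, CTheory.top_mem]

theorem nbhd_nbhd (𝒯 : Set (CTheory L)) (φ ψ : L.Sentence) :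
    nbhd (nbhd 𝒯 φ) ψ = nbhd 𝒯 (φ ⊓ ψ) := by
  ext T
  simp only [nbhd, Set.mem_ofPred_eq, CTheory.inf_mem_iff, and_assoc]

theorem not_eMinimal_iff (𝒯 : Set (CTheory L)) :
    ¬ EMinimal 𝒯 ↔ ∃ ψ : L.Sentence, (nbhd 𝒯 ψ).Infinite ∧ (nbhd 𝒯 ψ.not).Infinite := by
  simp only [EMinimal, not_forall, not_or, Set.Infinite]

theorem inconsistent_of_realize {φ ψ : L.Sentence}
    (h : ∀ (M : Type (max u v)) [L.Structure M], M ⊨ φ → M ⊨ ψ → False) :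
    Inconsistent φ ψ := fun ⟨M⟩ =>
  h M (M.is_model.realize_of_mem φ (Set.mem_insert φ {ψ}))
    (M.is_model.realize_of_mem ψ (Set.mem_insert_of_mem φ rfl))

theorem Inconsistent.symm {φ ψ : L.Sentence} (h : Inconsistent φ ψ) : Inconsistent ψ φ := by
  rwa [Inconsistent, Set.pair_comm]

theorem inconsistent_inf_of_eq_inf_not {a c : ℕ → L.Sentence}
    (ha : ∀ n, a (n + 1) = a n ⊓ (c n).not) {m n : ℕ} (hmn : m < n) :
    Inconsistent (a m ⊓ c m) (a n ⊓ c n) := by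
  refine inconsistent_of_realize fun M _ hm hn => ?_
  have ha_anti : Antitone fun k => M ⊨ a k := antitone_nat_of_succ_le fun k hk => by
    rw [ha k, Sentence.realize_inf] at hk
    exact hk.1
  have hm_succ : M ⊨ a (m + 1) := ha_anti hmn ((Sentence.realize_inf M).1 hn).1
  rw [ha m] at hm_succ
  simp only [Sentence.realize_inf, Sentence.realize_not] at hm hm_succ
  exact hm_succ.2 hm.2

theorem exists_pairwise_inconsistent_of_forall_split {P : L.Sentence → Prop}
    (hsplit : ∀ a, P a → ∃ ψ, P (a ⊓ ψ) ∧ P (a ⊓ ψ.not)) {σ : L.Sentence} (hσ : P σ) :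
    ∃ χ : ℕ → L.Sentence, (∀ m n, m ≠ n → Inconsistent (χ m) (χ n)) ∧ ∀ n, P (χ n) := by
  choose! ψ hψ using hsplit
  set a : ℕ → L.Sentence := fun n => (fun b => b ⊓ (ψ b).not)^[n] σ
  have ha_succ : ∀ n, a (n + 1) = a n ⊓ (ψ (a n)).not := fun n =>
    Function.iterate_succ_apply' _ n σ
  have hPa : ∀ n, P (a n) := fun n => by
    induction n with
    | zero => exact hσ
    | succ n ih => rw [ha_succ]; exact (hψ _ ih).2
  refine ⟨fun n => a n ⊓ ψ (a n), fun m n hmn => ?_, fun n => (hψ _ (hPa n)).1⟩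
  rcases hmn.lt_or_gt with hlt | hgt
  · exact inconsistent_inf_of_eq_inf_not ha_succ hlt
  · exact (inconsistent_inf_of_eq_inf_not ha_succ hgt).symm

theorem rsge_zero_iff (𝒯 : Set (CTheory L)) : RSge (0 : Ordinal.{w}) 𝒯 ↔ 𝒯.Nonempty := by
  rw [RSge, Ordinal.limitRecOn_zero]

theorem rsge_one_iff (𝒯 : Set (CTheory L)) : RSge ((0 : Ordinal.{w}) + 1) 𝒯 ↔ 𝒯.Infinite := by
  rw [RSge, Ordinal.limitRecOn_add_one, if_pos rfl]

theorem rsge_succ_iff {β : Ordinal.{w}} (hβ : β ≠ 0) (𝒯 : Set (CTheory L)) :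
    RSge (β + 1) 𝒯 ↔ ∃ φ : ℕ → L.Sentence,
      (∀ m n : ℕ, m ≠ n → Inconsistent (φ m) (φ n)) ∧ ∀ k : ℕ, RSge β (nbhd 𝒯 (φ k)) := by
  rw [RSge, Ordinal.limitRecOn_add_one, if_neg hβ]
  rfl

theorem rsge_limit_iff {β : Ordinal.{w}} (hβ : Order.IsSuccLimit β) (𝒯 : Set (CTheory L)) :
    RSge β 𝒯 ↔ ∀ γ < β, RSge γ 𝒯 := by
  rw [RSge, Ordinal.limitRecOn_limit _ _ _ _ hβ]
  rfl

theorem rsge_of_infinite_of_forall_not_eMinimal {C : Set (Set (CTheory L))}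
    (hC : ∀ S ∈ C, ∀ φ, nbhd S φ ∈ C) (hsplit : ∀ S ∈ C, S.Infinite → ¬ EMinimal S)
    (α : Ordinal.{w}) : ∀ S ∈ C, S.Infinite → RSge α S := by
  induction α using Ordinal.limitRecOn with
  | zero => exact fun S _ hS => (rsge_zero_iff S).2 hS.nonempty
  | add_one β ih =>
    intro S hSC hS
    rcases eq_or_ne β 0 with rfl | hβ
    · exact (rsge_one_iff S).2 hS
    have hsplit_nbhd : ∀ a, (nbhd S a).Infinite →
        ∃ ψ, (nbhd S (a ⊓ ψ)).Infinite ∧ (nbhd S (a ⊓ ψ.not)).Infinite := fun a ha => by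
      simpa only [not_eMinimal_iff, nbhd_nbhd] using hsplit _ (hC S hSC a) ha
    obtain ⟨χ, hχ, hχ_inf⟩ :=
      exists_pairwise_inconsistent_of_forall_split hsplit_nbhd (σ := ⊤) (by rwa [nbhd_top])
    exact (rsge_succ_iff hβ S).2 ⟨χ, hχ, fun k => ih _ (hC S hSC _) (hχ_inf k)⟩
  | limit β hβ ih =>
    exact fun S hSC hS => (rsge_limit_iff hβ S).2 fun γ hγ => ih γ hγ S hSC hS

/-- Proposition 3.2: if an infinite family `𝒯` has no `e`-minimal subfamily
`𝒯_φ`, then `𝒯` is not `e`-totally transcendental, i.e. `RS(𝒯) = ∞`. -/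
theorem rank_infty_of_no_eMinimal_subfamily (𝒯 : Set (CTheory L)) (hinf : 𝒯.Infinite)
    (hno : ∀ φ : L.Sentence, ¬ ((nbhd 𝒯 φ).Infinite ∧ EMinimal (nbhd 𝒯 φ))) :
    (∀ α : Ordinal.{w}, RSge α 𝒯) := by
  have hclosed : ∀ S ∈ range (nbhd 𝒯), ∀ φ, nbhd S φ ∈ range (nbhd 𝒯) := by
    rintro _ ⟨σ, rfl⟩ φ
    exact ⟨σ ⊓ φ, (nbhd_nbhd 𝒯 σ φ).symm⟩
  have hsplit : ∀ S ∈ range (nbhd 𝒯), S.Infinite → ¬ EMinimal S := by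
    rintro _ ⟨φ, rfl⟩ hS hE
    exact hno φ ⟨hS, hE⟩
  intro α
  rw [← nbhd_top 𝒯]
  exact rsge_of_infinite_of_forall_not_eMinimal hclosed hsplit α _ ⟨⊤, rfl⟩
    (by rwa [nbhd_top])
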